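/- Let X be a nonempty set, 𝒟 an algebra of bounded real-valued functions on X that is also a vector lattice with the Stone property, and (L,𝒟) a Lagrangian that is sup-norm-closable, i.e. for every h ∈ 𝒟 with h ≥ 0 and every sequence (f_n) ⊂ 𝒟 with L_{f_n−f_m,f_n−f_m}(h) → 0 as n,m → ∞ and ‖f_n‖_sup → 0, one has L_{f_n,f_n}(h) → 0. Then the associated energy E_L(f) := (1/2)·sup{|L_{f,f}(h)| : h ∈ 𝒟, ‖h‖_sup ≤ 1} is sup-norm-closable: for every sequence (f_n) ⊂ 𝒟 with E_L(f_n−f_m) → 0 as n,m → ∞ and ‖f_n‖_sup → 0, one has E_L(f_n) → 0. -/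

import Mathlib

/-!
For a nonnegative test function `h` in the unit ball, `|L_{f,f}(h)| ≤ 2 E_L(f)`, so an
`E_L`-Cauchy sequence is Cauchy for the quadratic form `L_h`, and closability of `L` gives
`L_{f_m,f_m}(h) → 0`. The parallelogram inequality
`L_h(f_n) ≤ 2 L_h(f_n - f_m) + 2 L_h(f_m)` then yields, as `m → ∞`, a bound on `L_h(f_n)` by
`4 sup_{m ≥ N} E_L(f_n - f_m)` that is uniform in `h`. Writing a general test function as
`h⁺ - h⁻` transfers this bound to `E_L(f_n)`.
-/

open Filter Topology

/-- The supremum norm of a (bounded) real-valued function. -/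
noncomputable def supNorm {X : Type*} (f : X → ℝ) : ℝ := ⨆ x, |f x|

/-- The unit contraction `T₁(t) = min(max(t,0),1)`. -/
def unitContraction (t : ℝ) : ℝ := min (max t 0) 1

/-- The energy associated with a Lagrangian:
`E_L(f) = (1/2)·sup{|L_{f,f}(h)| : h ∈ 𝒟, ‖h‖_sup ≤ 1}`. -/
noncomputable def lagEnergy {X : Type*} (𝒟 : Set (X → ℝ))
    (L : (X → ℝ) → (X → ℝ) → (X → ℝ) → ℝ) (f : X → ℝ) : ℝ :=
  (1 / 2) * sSup ((fun h => |L f f h|) '' {h | h ∈ 𝒟 ∧ supNorm h ≤ 1})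

section SupNorm

variable {X : Type*}

theorem supNorm_nonneg (f : X → ℝ) : 0 ≤ supNorm f :=
  Real.iSup_nonneg fun _ => abs_nonneg _

theorem abs_le_supNorm {f : X → ℝ} (hf : ∃ C : ℝ, ∀ x, |f x| ≤ C) (x : X) :
    |f x| ≤ supNorm f := by
  obtain ⟨C, hC⟩ := hf
  exact le_ciSup ⟨C, by rintro _ ⟨y, rfl⟩; exact hC y⟩ x

theorem supNorm_le_supNorm {f g : X → ℝ} (hg : ∃ C : ℝ, ∀ x, |g x| ≤ C)
    (hfg : ∀ x, |f x| ≤ |g x|) : supNorm f ≤ supNorm g :=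
  Real.iSup_le (fun x => (hfg x).trans (abs_le_supNorm hg x)) (supNorm_nonneg g)

theorem supNorm_posPart_le {h : X → ℝ} (hh : ∃ C : ℝ, ∀ x, |h x| ≤ C) :
    supNorm h⁺ ≤ supNorm h :=
  supNorm_le_supNorm hh fun x => by
    rw [Pi.posPart_apply, abs_of_nonneg (posPart_nonneg _)]
    exact max_le (le_abs_self _) (abs_nonneg _)

theorem supNorm_negPart_le {h : X → ℝ} (hh : ∃ C : ℝ, ∀ x, |h x| ≤ C) :
    supNorm h⁻ ≤ supNorm h :=
  supNorm_le_supNorm hh fun x => by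
    rw [Pi.negPart_apply, abs_of_nonneg (negPart_nonneg _)]
    exact max_le (neg_le_abs _) (abs_nonneg _)

end SupNorm

section Lattice

variable {X : Type*} {𝒟 : Set (X → ℝ)}

theorem posPart_mem (hsmul : ∀ c : ℝ, ∀ f ∈ 𝒟, c • f ∈ 𝒟)
    (hmax : ∀ f ∈ 𝒟, ∀ g ∈ 𝒟, (fun x => max (f x) (g x)) ∈ 𝒟) {h : X → ℝ} (hh : h ∈ 𝒟) :
    h⁺ ∈ 𝒟 :=
  hmax h hh 0 (by simpa using hsmul 0 h hh)

theorem negPart_mem (hsmul : ∀ c : ℝ, ∀ f ∈ 𝒟, c • f ∈ 𝒟)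
    (hmax : ∀ f ∈ 𝒟, ∀ g ∈ 𝒟, (fun x => max (f x) (g x)) ∈ 𝒟) {h : X → ℝ} (hh : h ∈ 𝒟) :
    h⁻ ∈ 𝒟 :=
  posPart_mem hsmul hmax (by simpa using hsmul (-1) h hh)

theorem abs_le_of_forall_nonneg_le {φ : (X → ℝ) → ℝ}
    (hsmul : ∀ c : ℝ, ∀ f ∈ 𝒟, c • f ∈ 𝒟)
    (hmax : ∀ f ∈ 𝒟, ∀ g ∈ 𝒟, (fun x => max (f x) (g x)) ∈ 𝒟)
    (hφadd : ∀ h₁ ∈ 𝒟, ∀ h₂ ∈ 𝒟, φ (h₁ + h₂) = φ h₁ + φ h₂)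
    (hφsmul : ∀ c : ℝ, ∀ h ∈ 𝒟, φ (c • h) = c * φ h)
    (hφpos : ∀ h ∈ 𝒟, (∀ x, 0 ≤ h x) → 0 ≤ φ h)
    {M : ℝ} (hM : ∀ h ∈ 𝒟, (∀ x, 0 ≤ h x) → supNorm h ≤ 1 → φ h ≤ M)
    {h : X → ℝ} (hh : h ∈ 𝒟) (hh_bdd : ∃ C : ℝ, ∀ x, |h x| ≤ C) (h1 : supNorm h ≤ 1) :
    |φ h| ≤ M := by
  have hpD := posPart_mem hsmul hmax hh
  have hnD := negPart_mem hsmul hmax hh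
  have hp_nonneg : ∀ x, 0 ≤ h⁺ x := fun x => posPart_nonneg (h x)
  have hn_nonneg : ∀ x, 0 ≤ h⁻ x := fun x => negPart_nonneg (h x)
  have hsplit : φ h = φ h⁺ - φ h⁻ := by
    conv_lhs => rw [← posPart_sub_negPart h, sub_eq_add_neg, ← neg_one_smul ℝ h⁻]
    rw [hφadd _ hpD _ (hsmul (-1) _ hnD), hφsmul _ _ hnD]
    ring
  rw [hsplit]
  exact abs_sub_le_of_nonneg_of_le (hφpos _ hpD hp_nonneg)
    (hM _ hpD hp_nonneg ((supNorm_posPart_le hh_bdd).trans h1)) (hφpos _ hnD hn_nonneg)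
    (hM _ hnD hn_nonneg ((supNorm_negPart_le hh_bdd).trans h1))

end Lattice

section BilinearForm

variable {E : Type*} [AddCommGroup E] [Module ℝ E] {𝒟 : Set E}

structure IsSymmBilinOn (𝒟 : Set E) (B : E → E → ℝ) : Prop where
  symm : ∀ f ∈ 𝒟, ∀ g ∈ 𝒟, B f g = B g f
  add_left : ∀ f₁ ∈ 𝒟, ∀ f₂ ∈ 𝒟, ∀ g ∈ 𝒟, B (f₁ + f₂) g = B f₁ g + B f₂ g
  smul_left : ∀ c : ℝ, ∀ f ∈ 𝒟, ∀ g ∈ 𝒟, B (c • f) g = c * B f g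

theorem sub_mem_of_add_mem_of_smul_mem (hadd : ∀ f ∈ 𝒟, ∀ g ∈ 𝒟, f + g ∈ 𝒟)
    (hsmul : ∀ c : ℝ, ∀ f ∈ 𝒟, c • f ∈ 𝒟) {f g : E} (hf : f ∈ 𝒟) (hg : g ∈ 𝒟) :
    f - g ∈ 𝒟 := by
  simpa [sub_eq_add_neg] using hadd f hf _ (hsmul (-1) g hg)

namespace IsSymmBilinOn

variable {B : E → E → ℝ}

theorem apply_add_smul_self (hB : IsSymmBilinOn 𝒟 B) (hadd : ∀ f ∈ 𝒟, ∀ g ∈ 𝒟, f + g ∈ 𝒟)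
    (hsmul : ∀ c : ℝ, ∀ f ∈ 𝒟, c • f ∈ 𝒟) {a b : E} (ha : a ∈ 𝒟) (hb : b ∈ 𝒟) (c : ℝ) :
    B (a + c • b) (a + c • b) = B a a + 2 * c * B a b + c ^ 2 * B b b := by
  have hcb := hsmul c b hb
  have hs := hadd a ha _ hcb
  rw [hB.add_left a ha _ hcb _ hs, hB.smul_left c b hb _ hs, hB.symm a ha _ hs,
    hB.symm b hb _ hs, hB.add_left a ha _ hcb a ha, hB.add_left a ha _ hcb b hb,
    hB.smul_left c b hb a ha, hB.smul_left c b hb b hb, hB.symm b hb a ha]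
  ring

theorem apply_add_self_le (hB : IsSymmBilinOn 𝒟 B) (hadd : ∀ f ∈ 𝒟, ∀ g ∈ 𝒟, f + g ∈ 𝒟)
    (hsmul : ∀ c : ℝ, ∀ f ∈ 𝒟, c • f ∈ 𝒟) (hpos : ∀ f ∈ 𝒟, 0 ≤ B f f) {a b : E}
    (ha : a ∈ 𝒟) (hb : b ∈ 𝒟) : B (a + b) (a + b) ≤ 2 * B a a + 2 * B b b := by
  have hplus := hB.apply_add_smul_self hadd hsmul ha hb 1
  have hminus := hB.apply_add_smul_self hadd hsmul ha hb (-1)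
  have := hpos _ (hadd a ha _ (hsmul (-1) b hb))
  rw [one_smul] at hplus
  linarith

theorem apply_self_le_of_tendsto {ι : Type*} {l : Filter ι} [l.NeBot] (hB : IsSymmBilinOn 𝒟 B)
    (hadd : ∀ f ∈ 𝒟, ∀ g ∈ 𝒟, f + g ∈ 𝒟) (hsmul : ∀ c : ℝ, ∀ f ∈ 𝒟, c • f ∈ 𝒟)
    (hpos : ∀ f ∈ 𝒟, 0 ≤ B f f) {g : E} (hg : g ∈ 𝒟) {f : ι → E} (hf : ∀ i, f i ∈ 𝒟)
    {δ : ℝ} (hδ : ∀ᶠ i in l, B (g - f i) (g - f i) ≤ δ)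
    (hlim : Tendsto (fun i => B (f i) (f i)) l (𝓝 0)) : B g g ≤ 2 * δ := by
  have hbound : ∀ᶠ i in l, B g g ≤ 2 * δ + 2 * B (f i) (f i) := by
    filter_upwards [hδ] with i hi
    have := hB.apply_add_self_le hadd hsmul hpos
      (sub_mem_of_add_mem_of_smul_mem hadd hsmul hg (hf i)) (hf i)
    rw [sub_add_cancel] at this
    linarith
  have hlim' : Tendsto (fun i => 2 * δ + 2 * B (f i) (f i)) l (𝓝 (2 * δ)) := by
    simpa using tendsto_const_nhds.add (hlim.const_mul 2)
  exact ge_of_tendsto hlim' hbound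

end IsSymmBilinOn

end BilinearForm

section Energy

variable {X : Type*} {𝒟 : Set (X → ℝ)} {L : (X → ℝ) → (X → ℝ) → (X → ℝ) → ℝ}

theorem lagEnergy_nonneg (f : X → ℝ) : 0 ≤ lagEnergy 𝒟 L f :=
  mul_nonneg (by norm_num) (Real.sSup_nonneg (by rintro _ ⟨h, _, rfl⟩; exact abs_nonneg _))

theorem abs_le_two_mul_lagEnergy {f : X → ℝ}
    (hLf : ∃ C : ℝ, ∀ h ∈ 𝒟, |L f f h| ≤ C * supNorm h) {h : X → ℝ} (hh : h ∈ 𝒟)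
    (h1 : supNorm h ≤ 1) : |L f f h| ≤ 2 * lagEnergy 𝒟 L f := by
  obtain ⟨C, hC⟩ := hLf
  have hbdd : BddAbove ((fun h => |L f f h|) '' {h | h ∈ 𝒟 ∧ supNorm h ≤ 1}) := by
    refine ⟨max C 0, ?_⟩
    rintro _ ⟨h, ⟨hh, h1⟩, rfl⟩
    calc |L f f h| ≤ C * supNorm h := hC h hh
      _ ≤ max C 0 * 1 := mul_le_mul (le_max_left _ _) h1 (supNorm_nonneg h) (le_max_right _ _)
      _ = max C 0 := mul_one _
  have := le_csSup hbdd ⟨h, ⟨hh, h1⟩, rfl⟩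
  unfold lagEnergy
  linarith

theorem lagEnergy_le {f : X → ℝ} {M : ℝ} (hM : 0 ≤ M)
    (hbound : ∀ h ∈ 𝒟, supNorm h ≤ 1 → |L f f h| ≤ M) : lagEnergy 𝒟 L f ≤ M / 2 := by
  have : sSup ((fun h => |L f f h|) '' {h | h ∈ 𝒟 ∧ supNorm h ≤ 1}) ≤ M :=
    Real.sSup_le (by rintro _ ⟨h, ⟨hh, h1⟩, rfl⟩; exact hbound h hh h1) hM
  unfold lagEnergy
  linarith

end Energy

theorem statement_13_general {X : Type*} (𝒟 : Set (X → ℝ))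
    (L : (X → ℝ) → (X → ℝ) → (X → ℝ) → ℝ)
    (hbdd : ∀ f ∈ 𝒟, ∃ C : ℝ, ∀ x, |f x| ≤ C)
    (hadd : ∀ f ∈ 𝒟, ∀ g ∈ 𝒟, f + g ∈ 𝒟)
    (hsmul : ∀ c : ℝ, ∀ f ∈ 𝒟, c • f ∈ 𝒟)
    (hmax : ∀ f ∈ 𝒟, ∀ g ∈ 𝒟, (fun x => max (f x) (g x)) ∈ 𝒟)
    -- each `L_{f,g}` is a sup-norm-bounded linear functional on `𝒟`
    (hLbdd : ∀ f ∈ 𝒟, ∀ g ∈ 𝒟, ∃ C : ℝ, ∀ h ∈ 𝒟, |L f g h| ≤ C * supNorm h)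
    (hLaddh : ∀ f ∈ 𝒟, ∀ g ∈ 𝒟, ∀ h₁ ∈ 𝒟, ∀ h₂ ∈ 𝒟,
      L f g (h₁ + h₂) = L f g h₁ + L f g h₂)
    (hLsmulh : ∀ f ∈ 𝒟, ∀ g ∈ 𝒟, ∀ c : ℝ, ∀ h ∈ 𝒟, L f g (c • h) = c * L f g h)
    -- `L` is bilinear and symmetric in `(f,g)`
    (hLsym : ∀ f ∈ 𝒟, ∀ g ∈ 𝒟, ∀ h ∈ 𝒟, L f g h = L g f h)
    (hLaddf : ∀ f₁ ∈ 𝒟, ∀ f₂ ∈ 𝒟, ∀ g ∈ 𝒟, ∀ h ∈ 𝒟,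
      L (f₁ + f₂) g h = L f₁ g h + L f₂ g h)
    (hLsmulf : ∀ c : ℝ, ∀ f ∈ 𝒟, ∀ g ∈ 𝒟, ∀ h ∈ 𝒟, L (c • f) g h = c * L f g h)
    -- positivity of each `L_f = L_{f,f}`
    (hLpos : ∀ f ∈ 𝒟, ∀ h ∈ 𝒟, (∀ x, 0 ≤ h x) → 0 ≤ L f f h)
    -- `(L,𝒟)` is sup-norm-closable
    (hLclos : ∀ h ∈ 𝒟, (∀ x, 0 ≤ h x) → ∀ f : ℕ → X → ℝ, (∀ n, f n ∈ 𝒟) →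
      (∀ ε : ℝ, 0 < ε → ∃ N, ∀ n ≥ N, ∀ m ≥ N, L (f n - f m) (f n - f m) h < ε) →
      Tendsto (fun n => supNorm (f n)) atTop (𝓝 0) →
      Tendsto (fun n => L (f n) (f n) h) atTop (𝓝 0)) :
    ∀ f : ℕ → X → ℝ, (∀ n, f n ∈ 𝒟) →
      (∀ ε : ℝ, 0 < ε → ∃ N, ∀ n ≥ N, ∀ m ≥ N,
        lagEnergy 𝒟 L (f n - f m) < ε) →
      Tendsto (fun n => supNorm (f n)) atTop (𝓝 0) →
      Tendsto (fun n => lagEnergy 𝒟 L (f n)) atTop (𝓝 0) := by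
  intro f hf hCauchy hsup
  have hsub : ∀ n m, f n - f m ∈ 𝒟 := fun n m =>
    sub_mem_of_add_mem_of_smul_mem hadd hsmul (hf n) (hf m)
  have hB : ∀ h ∈ 𝒟, IsSymmBilinOn 𝒟 (fun f g => L f g h) := fun h hh =>
    ⟨fun f hf g hg => hLsym f hf g hg h hh,
      fun f₁ hf₁ f₂ hf₂ g hg => hLaddf f₁ hf₁ f₂ hf₂ g hg h hh,
      fun c f hf g hg => hLsmulf c f hf g hg h hh⟩
  have hL_le_energy : ∀ h ∈ 𝒟, supNorm h ≤ 1 → ∀ g ∈ 𝒟, L g g h ≤ 2 * lagEnergy 𝒟 L g :=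
    fun h hh h1 g hg => (le_abs_self _).trans (abs_le_two_mul_lagEnergy (hLbdd g hg g hg) hh h1)
  refine tendsto_order.2 ⟨fun a ha => Eventually.of_forall fun n =>
    ha.trans_le (lagEnergy_nonneg _), fun ε hε => ?_⟩
  obtain ⟨N, hN⟩ := hCauchy (ε / 4) (by positivity)
  filter_upwards [eventually_ge_atTop N] with n hn
  have hbound : ∀ h ∈ 𝒟, (∀ x, 0 ≤ h x) → supNorm h ≤ 1 → L (f n) (f n) h ≤ ε := by
    intro h hh hpos h1
    have hlim : Tendsto (fun m => L (f m) (f m) h) atTop (𝓝 0) := by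
      refine hLclos h hh hpos f hf (fun δ hδ => ?_) hsup
      obtain ⟨M, hM⟩ := hCauchy (δ / 2) (by positivity)
      exact ⟨M, fun p hp q hq => by linarith [hL_le_energy h hh h1 _ (hsub p q), hM p hp q hq]⟩
    have hclose : ∀ᶠ m in atTop, L (f n - f m) (f n - f m) h ≤ ε / 2 := by
      filter_upwards [eventually_ge_atTop N] with m hm
      linarith [hL_le_energy h hh h1 _ (hsub n m), hN n hn m hm]
    have := (hB h hh).apply_self_le_of_tendsto hadd hsmul (fun g hg => hLpos g hg h hh hpos)
      (hf n) hf hclose hlim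
    linarith
  calc lagEnergy 𝒟 L (f n) ≤ ε / 2 := lagEnergy_le hε.le fun h hh h1 =>
        abs_le_of_forall_nonneg_le hsmul hmax (hLaddh _ (hf n) _ (hf n))
          (hLsmulh _ (hf n) _ (hf n)) (hLpos _ (hf n)) hbound hh (hbdd h hh) h1
    _ < ε := by linarith

/-- Theorem: if a Lagrangian `(L,𝒟)` is sup-norm-closable, then its associated energy
`E_L` is a sup-norm-closable bilinear form. -/
theorem statement_13 {X : Type*} [Nonempty X] (𝒟 : Set (X → ℝ))
    (L : (X → ℝ) → (X → ℝ) → (X → ℝ) → ℝ)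
    (hbdd : ∀ f ∈ 𝒟, ∃ C : ℝ, ∀ x, |f x| ≤ C)
    (hadd : ∀ f ∈ 𝒟, ∀ g ∈ 𝒟, f + g ∈ 𝒟)
    (hsmul : ∀ c : ℝ, ∀ f ∈ 𝒟, c • f ∈ 𝒟)
    (hmul : ∀ f ∈ 𝒟, ∀ g ∈ 𝒟, f * g ∈ 𝒟)
    (hmax : ∀ f ∈ 𝒟, ∀ g ∈ 𝒟, (fun x => max (f x) (g x)) ∈ 𝒟)
    (hmin : ∀ f ∈ 𝒟, ∀ g ∈ 𝒟, (fun x => min (f x) (g x)) ∈ 𝒟)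
    (hstone : ∀ f ∈ 𝒟, (fun x => min (f x) 1) ∈ 𝒟)
    -- each `L_{f,g}` is a sup-norm-bounded linear functional on `𝒟`
    (hLbdd : ∀ f ∈ 𝒟, ∀ g ∈ 𝒟, ∃ C : ℝ, ∀ h ∈ 𝒟, |L f g h| ≤ C * supNorm h)
    (hLaddh : ∀ f ∈ 𝒟, ∀ g ∈ 𝒟, ∀ h₁ ∈ 𝒟, ∀ h₂ ∈ 𝒟,
      L f g (h₁ + h₂) = L f g h₁ + L f g h₂)
    (hLsmulh : ∀ f ∈ 𝒟, ∀ g ∈ 𝒟, ∀ c : ℝ, ∀ h ∈ 𝒟, L f g (c • h) = c * L f g h)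
    -- `L` is bilinear and symmetric in `(f,g)`
    (hLsym : ∀ f ∈ 𝒟, ∀ g ∈ 𝒟, ∀ h ∈ 𝒟, L f g h = L g f h)
    (hLaddf : ∀ f₁ ∈ 𝒟, ∀ f₂ ∈ 𝒟, ∀ g ∈ 𝒟, ∀ h ∈ 𝒟,
      L (f₁ + f₂) g h = L f₁ g h + L f₂ g h)
    (hLsmulf : ∀ c : ℝ, ∀ f ∈ 𝒟, ∀ g ∈ 𝒟, ∀ h ∈ 𝒟, L (c • f) g h = c * L f g h)
    -- positivity of each `L_f = L_{f,f}`
    (hLpos : ∀ f ∈ 𝒟, ∀ h ∈ 𝒟, (∀ x, 0 ≤ h x) → 0 ≤ L f f h)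
    -- the unit contraction operates on `(L,𝒟)`
    (hLT1 : ∀ f ∈ 𝒟, unitContraction ∘ f ∈ 𝒟 ∧
      ∀ h ∈ 𝒟, (∀ x, 0 ≤ h x) →
        L (unitContraction ∘ f) (unitContraction ∘ f) h ≤ L f f h)
    -- `(L,𝒟)` is sup-norm-closable
    (hLclos : ∀ h ∈ 𝒟, (∀ x, 0 ≤ h x) → ∀ f : ℕ → X → ℝ, (∀ n, f n ∈ 𝒟) →
      (∀ ε : ℝ, 0 < ε → ∃ N, ∀ n ≥ N, ∀ m ≥ N, L (f n - f m) (f n - f m) h < ε) →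
      Tendsto (fun n => supNorm (f n)) atTop (𝓝 0) →
      Tendsto (fun n => L (f n) (f n) h) atTop (𝓝 0)) :
    ∀ f : ℕ → X → ℝ, (∀ n, f n ∈ 𝒟) →
      (∀ ε : ℝ, 0 < ε → ∃ N, ∀ n ≥ N, ∀ m ≥ N,
        lagEnergy 𝒟 L (f n - f m) < ε) →
      Tendsto (fun n => supNorm (f n)) atTop (𝓝 0) →
      Tendsto (fun n => lagEnergy 𝒟 L (f n)) atTop (𝓝 0) :=
  statement_13_general 𝒟 L hbdd hadd hsmul hmax hLbdd hLaddh hLsmulh hLsym hLaddf hLsmulf hLpos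
    hLclos
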